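/- arXiv:2401.16942 — 10 statements merged into one kernel-verified Lean document; each statement's English description precedes it below -/
import Mathlib

section
/- Let 0 < α < β and let u : [0,β] → ℝ≥0 be continuously differentiable, constant on [0,α], strictly decreasing and positive on [α,β). Let δ ∈ (α,β) satisfy u(δ) = u(0)/e, and let g be the density g(y) = -u'(y)/u(y) on [α,δ] (zero otherwise). Define v(x,y) = u(x) if x > y and v(x,y) = u(x) - u(y) if x ≤ y. Then for every x ∈ [0,β], the expected payoff ∫_0^β v(x,y) g(y) dy ≤ u(0)/e. -/
/-! Against `g` the payoff of `x ≤ δ` is `u x ∫_α^δ g - ∫_{max x α}^δ u g`. Since `g = -(log u)'`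
and `u g = -u'`, this is `u x (log u α - log u δ) - u (max x α) + u δ`, and the choice of `δ`
makes the logarithmic factor `1`; as `u x = u (max x α)`, the payoff is exactly `u δ = u 0 / e`.
For `x > δ` the payoff is `u x`, which is below `u δ` because `u` decreases. -/

open MeasureTheory Set Real Interval

theorem intervalIntegral.integral_indicator_Icc {E : Type*} [NormedAddCommGroup E]
    [NormedSpace ℝ E] {μ : Measure ℝ} [NullSingletonClass μ] {f : ℝ → E} {a b c d : ℝ}
    (hac : a < c) (hcd : c ≤ d) (hdb : d ≤ b) :
    ∫ x in a..b, (Icc c d).indicator f x ∂μ = ∫ x in c..d, f x ∂μ := by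
  rw [integral_of_le (hac.le.trans (hcd.trans hdb)), setIntegral_indicator measurableSet_Icc,
    inter_eq_right.2 (Icc_subset_Ioc hac hdb), integral_Icc_eq_integral_Ioc, integral_of_le hcd]

noncomputable def hazard (u u' : ℝ → ℝ) (y : ℝ) : ℝ := -u' y / u y

noncomputable def payoff (u : ℝ → ℝ) (x y : ℝ) : ℝ := if y < x then u x else u x - u y

section Hazard

variable {u u' : ℝ → ℝ} {a b : ℝ}

theorem intervalIntegrable_affine_mul_hazard (hu : ∀ y ∈ [[a, b]], HasDerivAt u (u' y) y)
    (hu' : ContinuousOn u' [[a, b]]) (hu0 : ∀ y ∈ [[a, b]], u y ≠ 0) (c d : ℝ) :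
    IntervalIntegrable (fun y => (c - d * u y) * hazard u u' y) volume a b := by
  have hcont : ContinuousOn u [[a, b]] := fun y hy => (hu y hy).continuousAt.continuousWithinAt
  exact ContinuousOn.intervalIntegrable <|
    (continuousOn_const.sub (continuousOn_const.mul hcont)).mul (hu'.neg.div hcont hu0)

theorem integral_affine_mul_hazard (hu : ∀ y ∈ [[a, b]], HasDerivAt u (u' y) y)
    (hu' : ContinuousOn u' [[a, b]]) (hu0 : ∀ y ∈ [[a, b]], u y ≠ 0) (c d : ℝ) :
    ∫ y in a..b, (c - d * u y) * hazard u u' y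
      = c * (log (u a) - log (u b)) - d * (u a - u b) := by
  have hF : ∀ y ∈ [[a, b]], HasDerivAt (fun y => d * u y - c * log (u y))
      ((c - d * u y) * hazard u u' y) y := by
    intro y hy
    refine (((hu y hy).const_mul d).sub (((hu y hy).log (hu0 y hy)).const_mul c)).congr_deriv ?_
    unfold hazard
    field_simp [hu0 y hy]
    ring
  rw [intervalIntegral.integral_eq_sub_of_hasDerivAt hF
    (intervalIntegrable_affine_mul_hazard hu hu' hu0 c d)]
  ring

end Hazard

/-- Below `max α (min x δ)` the payoff is `u x`, above it `u x - u y`. -/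
theorem integral_payoff_mul_hazard {u u' : ℝ → ℝ} {α δ : ℝ} (hαδ : α ≤ δ)
    (hu : ∀ y ∈ Icc α δ, HasDerivAt u (u' y) y) (hu' : ContinuousOn u' (Icc α δ))
    (hu0 : ∀ y ∈ Icc α δ, u y ≠ 0) (x : ℝ) :
    ∫ y in α..δ, payoff u x y * hazard u u' y
      = u x * (log (u α) - log (u δ)) - (u (max α (min x δ)) - u δ) := by
  set m := max α (min x δ)
  have hm : m ∈ Icc α δ := ⟨le_max_left _ _, max_le hαδ (min_le_right _ _)⟩
  have piece : ∀ a ∈ Icc α δ, ∀ b ∈ Icc α δ, ∀ c d : ℝ,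
      IntervalIntegrable (fun y => (c - d * u y) * hazard u u' y) volume a b ∧
      ∫ y in a..b, (c - d * u y) * hazard u u' y
        = c * (log (u a) - log (u b)) - d * (u a - u b) := by
    intro a ha b hb c d
    have h := uIcc_subset_Icc ha hb
    exact ⟨intervalIntegrable_affine_mul_hazard (fun y hy => hu y (h hy)) (hu'.mono h)
        (fun y hy => hu0 y (h hy)) c d,
      integral_affine_mul_hazard (fun y hy => hu y (h hy)) (hu'.mono h)
        (fun y hy => hu0 y (h hy)) c d⟩
  have hlow : EqOn (fun y => payoff u x y * hazard u u' y)
      (fun y => (u x - 0 * u y) * hazard u u' y) (Ioo α m) := by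
    intro y hy
    have hyx : y < x := (lt_max_iff.1 hy.2).resolve_left hy.1.not_gt |>.trans_le (min_le_left _ _)
    simp [payoff, hyx]
  have hhigh : EqOn (fun y => payoff u x y * hazard u u' y)
      (fun y => (u x - 1 * u y) * hazard u u' y) (Ioo m δ) := by
    intro y hy
    have hxy : x < y :=
      (min_lt_iff.1 ((le_max_right _ _).trans_lt hy.1)).resolve_right hy.2.not_gt
    simp [payoff, hxy.not_gt]
  obtain ⟨hint₁, hI₁⟩ := piece α ⟨le_rfl, hαδ⟩ m hm (u x) 0
  obtain ⟨hint₂, hI₂⟩ := piece m hm δ ⟨hαδ, le_rfl⟩ (u x) 1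
  rw [← intervalIntegral.integral_add_adjacent_intervals
      (hint₁.congr_uIoo (by rwa [uIoo_of_le hm.1, eqOn_comm]))
      (hint₂.congr_uIoo (by rwa [uIoo_of_le hm.2, eqOn_comm])),
    intervalIntegral.integral_congr_Ioo_of_le hm.1 hlow,
    intervalIntegral.integral_congr_Ioo_of_le hm.2 hhigh, hI₁, hI₂]
  ring

theorem stmt_2_general (α β δ : ℝ) (u u' g : ℝ → ℝ) (v : ℝ → ℝ → ℝ)
    (hα : 0 < α)
    (hderiv : ∀ y ∈ Set.Icc α β, HasDerivAt u (u' y) y)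
    (hderivcont : ContinuousOn u' (Set.Icc α β))
    (hconst : ∀ x ∈ Set.Icc 0 α, u x = u 0)
    (hdec : StrictAntiOn u (Set.Icc α β))
    (hposu : ∀ x ∈ Set.Ico α β, 0 < u x)
    (hδ : δ ∈ Set.Ioo α β) (hδe : u δ = u 0 / Real.exp 1)
    (hg : ∀ y, g y = if y ∈ Set.Icc α δ then -u' y / u y else 0)
    (hv : ∀ x y, v x y = if x > y then u x else u x - u y) :
    ∀ x ∈ Set.Icc (0:ℝ) β, (∫ y in (0:ℝ)..β, v x y * g y) ≤ u 0 / Real.exp 1 := by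
  intro x hx
  have hαδβ : Icc α δ ⊆ Icc α β := Icc_subset_Icc_right hδ.2.le
  have huα : u α = u 0 := hconst α ⟨hα.le, le_rfl⟩
  have hu0 : 0 < u 0 := huα ▸ hposu α ⟨le_rfl, hδ.1.trans hδ.2⟩
  have hlog : log (u α) - log (u δ) = 1 := by
    rw [huα, hδe, log_div hu0.ne' (exp_ne_zero 1), log_exp]
    ring
  have hvg : ∀ y,
      v x y * g y = (Icc α δ).indicator (fun y => payoff u x y * hazard u u' y) y := by
    intro y
    rw [hg, indicator_apply]
    split_ifs <;> simp [hv, payoff, hazard]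
  have hmono : u x ≤ u (max α (min x δ)) := by
    rcases le_or_gt x α with hxα | hxα
    · rw [max_eq_left ((min_le_left _ _).trans hxα), huα, hconst x ⟨hx.1, hxα⟩]
    · exact hdec.antitoneOn ⟨le_max_left _ _, (max_le hxα.le (min_le_left _ _)).trans hx.2⟩
        ⟨hxα.le, hx.2⟩ (max_le hxα.le (min_le_left _ _))
  simp_rw [hvg]
  rw [intervalIntegral.integral_indicator_Icc hα hδ.1.le hδ.2.le,
    integral_payoff_mul_hazard hδ.1.le (fun y hy => hderiv y (hαδβ hy)) (hderivcont.mono hαδβ)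
      (fun y hy => (hposu y ⟨hy.1, hy.2.trans_lt hδ.2⟩).ne') x, hlog, ← hδe]
  linarith

/-- Against the hazard-rate density g, every pure action x of the maximizing
player yields expected payoff at most u(0)/e, where v(x,y) = u(x) if x > y and
u(x) - u(y) if x ≤ y. -/
theorem stmt_2 (α β δ : ℝ) (u u' g : ℝ → ℝ) (v : ℝ → ℝ → ℝ)
    (hα : 0 < α) (hαβ : α < β)
    (hderiv : ∀ y ∈ Set.Icc α β, HasDerivAt u (u' y) y)
    (hderivcont : ContinuousOn u' (Set.Icc α β))
    (hconst : ∀ x ∈ Set.Icc 0 α, u x = u 0)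
    (hdec : StrictAntiOn u (Set.Icc α β))
    (hposu : ∀ x ∈ Set.Ico α β, 0 < u x)
    (hδ : δ ∈ Set.Ioo α β) (hδe : u δ = u 0 / Real.exp 1)
    (hg : ∀ y, g y = if y ∈ Set.Icc α δ then -u' y / u y else 0)
    (hv : ∀ x y, v x y = if x > y then u x else u x - u y) :
    ∀ x ∈ Set.Icc (0:ℝ) β, (∫ y in (0:ℝ)..β, v x y * g y) ≤ u 0 / Real.exp 1 :=
  stmt_2_general α β δ u u' g v hα hderiv hderivcont hconst hdec hposu hδ hδe hg hv
end

section
/- Under the hypotheses of the previous setup (u continuously differentiable, constant equal to u(0)>0 on [0,α], strictly decreasing and positive on [α,β), δ with u(δ)=u(0)/e, g(y) = -u'(y)/u(y) on [α,δ]), for every x ∈ [α,δ] the expected payoff ∫_0^β v(x,y) g(y) dy equals exactly u(0)/e, where v(x,y) = u(x) for x > y and u(x) - u(y) for x ≤ y. -/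
open MeasureTheory intervalIntegral Set

/-!
On `[α, δ]` the density is `g = -u'/u = -(log u)'`, so `u(y) g(y) = -u'(y)`. Hence against
`g` the payoff of `x` is `u(x) ∫_α^δ g - ∫_x^δ u g = u(x) (log u(α) - log u(δ)) + u(δ) - u(x)`,
and `log u(α) - log u(δ) = 1` because `u(δ) = u(α)/e`.
-/

theorem intervalIntegral_indicator_Icc {f : ℝ → ℝ} {a b c d : ℝ}
    (hca : c ≤ a) (hab : a ≤ b) (hbd : b ≤ d) :
    ∫ y in c..d, (Icc a b).indicator f y = ∫ y in a..b, f y := by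
  rw [integral_of_le (hca.trans (hab.trans hbd)), integral_of_le hab,
    setIntegral_indicator measurableSet_Icc]
  refine setIntegral_congr_set ?_
  have hIoc : Ioc c d ∩ Ioc a b = Ioc a b := inter_eq_right.mpr (Ioc_subset_Ioc hca hbd)
  exact hIoc ▸ (Filter.EventuallyEq.rfl.inter Ioc_ae_eq_Icc.symm)

theorem intervalIntegrable_indicator_Icc {f : ℝ → ℝ} {a b : ℝ} (hf : IntegrableOn f (Icc a b))
    (c d : ℝ) : IntervalIntegrable ((Icc a b).indicator f) volume c d :=
  (hf.integrable_indicator measurableSet_Icc).intervalIntegrable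

theorem integral_neg_div_self_eq_log_sub {u u' : ℝ → ℝ} {a b : ℝ}
    (hderiv : ∀ y ∈ uIcc a b, HasDerivAt u (u' y) y) (hcont : ContinuousOn u' (uIcc a b))
    (hne : ∀ y ∈ uIcc a b, u y ≠ 0) :
    ∫ y in a..b, -u' y / u y = Real.log (u a) - Real.log (u b) := by
  have hcontu : ContinuousOn u (uIcc a b) := fun y hy =>
    (hderiv y hy).continuousAt.continuousWithinAt
  have hlog : ∀ y ∈ uIcc a b, HasDerivAt (fun z => -Real.log (u z)) (-u' y / u y) y :=
    fun y hy => by simpa only [neg_div, Pi.neg_def] using ((hderiv y hy).log (hne y hy)).neg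
  rw [integral_eq_sub_of_hasDerivAt hlog ((hcont.neg.div hcontu hne).intervalIntegrable)]
  ring

theorem payoff_mul_hazard_eq_indicator_add {u u' : ℝ → ℝ} {a d x : ℝ} (hax : a ≤ x)
    (hne : ∀ y ∈ Icc a d, u y ≠ 0) (y : ℝ) :
    (if x > y then u x else u x - u y) * (if y ∈ Icc a d then -u' y / u y else 0) =
      (Icc a d).indicator (fun y => u x * (-u' y / u y)) y + (Icc x d).indicator u' y := by
  by_cases hy : y ∈ Icc a d
  · by_cases hxy : x > y
    · have hy' : y ∉ Icc x d := fun h => (not_le.mpr hxy) h.1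
      simp [hy, hxy, hy']
    · have hy' : y ∈ Icc x d := ⟨not_lt.mp hxy, hy.2⟩
      simp only [hy, hxy, hy', if_true, if_false, indicator_of_mem]
      field_simp [hne y hy]
      ring
  · have hy' : y ∉ Icc x d := fun h => hy ⟨hax.trans h.1, h.2⟩
    simp [hy, hy']

theorem integral_payoff_mul_hazard_s3 {u u' : ℝ → ℝ} {a c d e x : ℝ}
    (hca : c ≤ a) (hax : a ≤ x) (hxd : x ≤ d) (hde : d ≤ e)
    (hderiv : ∀ y ∈ Icc a d, HasDerivAt u (u' y) y) (hcont : ContinuousOn u' (Icc a d))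
    (hne : ∀ y ∈ Icc a d, u y ≠ 0) :
    ∫ y in c..e, (if x > y then u x else u x - u y) * (if y ∈ Icc a d then -u' y / u y else 0) =
      u x * (Real.log (u a) - Real.log (u d)) + (u d - u x) := by
  have had : a ≤ d := hax.trans hxd
  have hsub : Icc x d ⊆ Icc a d := Icc_subset_Icc_left hax
  have hcontu : ContinuousOn u (Icc a d) := fun y hy =>
    (hderiv y hy).continuousAt.continuousWithinAt
  have hcontg : ContinuousOn (fun y => u x * (-u' y / u y)) (Icc a d) :=
    (hcont.neg.div hcontu hne).const_smul (u x)
  have hlog : ∫ y in a..d, -u' y / u y = Real.log (u a) - Real.log (u d) := by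
    refine integral_neg_div_self_eq_log_sub ?_ ?_ ?_ <;> rw [uIcc_of_le had]
    exacts [hderiv, hcont, hne]
  have hFTC : ∫ y in x..d, u' y = u d - u x :=
    integral_eq_sub_of_hasDerivAt (fun y hy => hderiv y (hsub (uIcc_of_le hxd ▸ hy)))
      ((hcont.mono hsub).intervalIntegrable_of_Icc hxd)
  simp_rw [payoff_mul_hazard_eq_indicator_add hax hne]
  rw [integral_add (intervalIntegrable_indicator_Icc hcontg.integrableOn_Icc _ _)
      (intervalIntegrable_indicator_Icc (hcont.mono hsub).integrableOn_Icc _ _),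
    intervalIntegral_indicator_Icc hca had hde,
    intervalIntegral_indicator_Icc (hca.trans hax) hxd hde,
    intervalIntegral.integral_const_mul, hlog, hFTC]

theorem stmt_3_general (α β δ : ℝ) (u u' g : ℝ → ℝ) (v : ℝ → ℝ → ℝ)
    (hα : 0 < α)
    (hderiv : ∀ y ∈ Set.Icc α β, HasDerivAt u (u' y) y)
    (hderivcont : ContinuousOn u' (Set.Icc α β))
    (hconst : ∀ x ∈ Set.Icc 0 α, u x = u 0)
    (hposu : ∀ x ∈ Set.Ico α β, 0 < u x)
    (hδ : δ ∈ Set.Ioo α β) (hδe : u δ = u 0 / Real.exp 1)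
    (hg : ∀ y, g y = if y ∈ Set.Icc α δ then -u' y / u y else 0)
    (hv : ∀ x y, v x y = if x > y then u x else u x - u y) :
    ∀ x ∈ Set.Icc α δ, (∫ y in (0:ℝ)..β, v x y * g y) = u 0 / Real.exp 1 := by
  rintro x ⟨hαx, hxδ⟩
  have hαδ : α ≤ δ := hαx.trans hxδ
  have hsub : Icc α δ ⊆ Icc α β := Icc_subset_Icc_right hδ.2.le
  have hne : ∀ y ∈ Icc α δ, u y ≠ 0 := fun y hy => (hposu y ⟨hy.1, hy.2.trans_lt hδ.2⟩).ne'
  have hlog : Real.log (u α) - Real.log (u δ) = 1 := by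
    have huα : u α = u 0 := hconst α ⟨hα.le, le_rfl⟩
    rw [hδe, ← huα, Real.log_div (hne α ⟨le_rfl, hαδ⟩) (Real.exp_ne_zero 1), Real.log_exp]
    ring
  simp_rw [hv, hg]
  rw [integral_payoff_mul_hazard_s3 hα.le hαx hxδ hδ.2.le (fun y hy => hderiv y (hsub hy))
    (hderivcont.mono hsub) hne, hlog, hδe]
  ring

/-- Against the hazard-rate density g, every pure action x of the maximizing
player in \[α,δ\] yields expected payoff exactly u(0)/e, where v(x,y) = u(x) if x > y and
u(x) - u(y) if x ≤ y. -/
theorem stmt_3 (α β δ : ℝ) (u u' g : ℝ → ℝ) (v : ℝ → ℝ → ℝ)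
    (hα : 0 < α) (hαβ : α < β)
    (hderiv : ∀ y ∈ Set.Icc α β, HasDerivAt u (u' y) y)
    (hderivcont : ContinuousOn u' (Set.Icc α β))
    (hconst : ∀ x ∈ Set.Icc 0 α, u x = u 0)
    (hdec : StrictAntiOn u (Set.Icc α β))
    (hposu : ∀ x ∈ Set.Ico α β, 0 < u x)
    (hδ : δ ∈ Set.Ioo α β) (hδe : u δ = u 0 / Real.exp 1)
    (hg : ∀ y, g y = if y ∈ Set.Icc α δ then -u' y / u y else 0)
    (hv : ∀ x y, v x y = if x > y then u x else u x - u y) :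
    ∀ x ∈ Set.Icc α δ, (∫ y in (0:ℝ)..β, v x y * g y) = u 0 / Real.exp 1 :=
  stmt_3_general α β δ u u' g v hα hderiv hderivcont hconst hposu hδ hδe hg hv
end

section
/- Let 0 < α < β, u as above, δ with u(δ) = u(0)/e, and let F be the CDF with F(y) = u(δ)/u(y) on [α,δ] (atom 1/e at 0, constant u(δ)/u(0) on [0,α)), F = 1 on [δ,β]. Define v(x,y) = u(x) if x > y, u(x) - u(y) if x ≤ y. Then for every y ∈ [0,β], the expected payoff E_{x∼F}[v(x,y)] ≥ u(0)/e. -/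
/-!
Write `D = u δ` and `F` for the CDF of the mixed strategy. Since `v x y = u x - 1[x ≤ y] u y`,
the expected payoff is `E[u] - F(y) u(y)`. On `[α, δ]` the density of `F` is the derivative of
`D / u`, so `F(y) = D / u(c)` with `c = max α (min y δ)`, while `E[u] = D + D (log u 0 - log D)`
by integrating `-(D log u)'`; the choice `D = u 0 / e` makes `E[u] = 2D`. Finally
`u y ≤ u c` because `u` is constant up to `α` and decreasing afterwards, so the payoff is
`2D - D u(y) / u(c) ≥ D`.
-/

open MeasureTheory Set intervalIntegral

section Antiderivatives

variable {u u' : ℝ → ℝ} {a b : ℝ}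

theorem continuousOn_neg_deriv_div_sq (c : ℝ) (hderiv : ∀ x ∈ uIcc a b, HasDerivAt u (u' x) x)
    (hcont : ContinuousOn u' (uIcc a b)) (hpos : ∀ x ∈ uIcc a b, 0 < u x) :
    ContinuousOn (fun x => c * (-u' x) / u x ^ 2) (uIcc a b) :=
  (continuousOn_const.mul hcont.neg).div
    ((continuousOn_of_forall_continuousAt fun x hx => (hderiv x hx).continuousAt).pow 2)
    fun x hx => pow_ne_zero 2 (hpos x hx).ne'

theorem integral_neg_deriv_div_sq (c : ℝ) (hderiv : ∀ x ∈ uIcc a b, HasDerivAt u (u' x) x)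
    (hcont : ContinuousOn u' (uIcc a b)) (hpos : ∀ x ∈ uIcc a b, 0 < u x) :
    ∫ x in a..b, c * (-u' x) / u x ^ 2 = c / u b - c / u a :=
  integral_eq_sub_of_hasDerivAt (f := fun x => c / u x)
    (fun x hx => ((hasDerivAt_const x c).div (hderiv x hx) (hpos x hx).ne').congr_deriv (by ring))
    (continuousOn_neg_deriv_div_sq c hderiv hcont hpos).intervalIntegrable

theorem integral_mul_neg_deriv_div_sq (c : ℝ) (hderiv : ∀ x ∈ uIcc a b, HasDerivAt u (u' x) x)
    (hcont : ContinuousOn u' (uIcc a b)) (hpos : ∀ x ∈ uIcc a b, 0 < u x) :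
    ∫ x in a..b, u x * (c * (-u' x) / u x ^ 2) = c * (Real.log (u a) - Real.log (u b)) := by
  have hantideriv : ∀ x ∈ uIcc a b, HasDerivAt (fun x => -(c * Real.log (u x)))
      (u x * (c * (-u' x) / u x ^ 2)) x := fun x hx =>
    (((hderiv x hx).log (hpos x hx).ne').const_mul c).neg.congr_deriv (by
      field_simp [(hpos x hx).ne'])
  have hu : ContinuousOn u (uIcc a b) :=
    continuousOn_of_forall_continuousAt fun x hx => (hderiv x hx).continuousAt
  rw [integral_eq_sub_of_hasDerivAt hantideriv
    (hu.mul (continuousOn_neg_deriv_div_sq c hderiv hcont hpos)).intervalIntegrable]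
  ring

end Antiderivatives

theorem integral_indicator_le_eq_integral_clamp {f : ℝ → ℝ} {a b : ℝ} (hab : a ≤ b)
    (y : ℝ) :
    ∫ x in a..b, {x | x ≤ y}.indicator f x = ∫ x in a..max a (min y b), f x := by
  have hclamp : max a (min y b) ∈ Icc a b := ⟨le_max_left _ _, max_le hab (min_le_right _ _)⟩
  rw [← integral_indicator hclamp]
  refine integral_congr_ae (Filter.Eventually.of_forall fun x hx => ?_)
  rw [uIoc_of_le hab] at hx
  have hle : x ≤ y ↔ x ≤ max a (min y b) := by
    simp only [le_max_iff, le_min_iff, hx.2, and_true, not_le.2 hx.1, false_or]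
  simp only [indicator, mem_ofPred_eq, hle]

/-- The identity `E[v(·, y)] = E[u] - F(y) u(y)` for the absolutely continuous part of `F`. -/
theorem integral_payoff_mul_eq {u f : ℝ → ℝ} {v : ℝ → ℝ → ℝ}
    (hv : ∀ x y, v x y = if x > y then u x else u x - u y) {a b : ℝ} (hab : a ≤ b)
    (hf : IntervalIntegrable f volume a b)
    (huf : IntervalIntegrable (fun x => u x * f x) volume a b) (y : ℝ) :
    ∫ x in a..b, v x y * f x =
      (∫ x in a..b, u x * f x) - u y * ∫ x in a..max a (min y b), f x := by
  have hsplit :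
      (fun x => v x y * f x) = fun x => u x * f x - u y * {x | x ≤ y}.indicator f x := by
    funext x
    by_cases hxy : x ≤ y <;> simp [hv, indicator, hxy, sub_mul]
  have hind : IntervalIntegrable ({x | x ≤ y}.indicator f) volume a b :=
    ⟨hf.1.indicator measurableSet_Iic, hf.2.indicator measurableSet_Iic⟩
  rw [hsplit, integral_sub huf (hind.const_mul _), intervalIntegral.integral_const_mul,
    integral_indicator_le_eq_integral_clamp hab]

theorem apply_le_apply_max_min {u : ℝ → ℝ} {α β δ y : ℝ} (hα : 0 ≤ α) (hαδ : α ≤ δ)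
    (hδβ : δ ≤ β) (hconst : ∀ x ∈ Icc 0 α, u x = u 0) (hdec : StrictAntiOn u (Icc α β))
    (hy : y ∈ Icc 0 β) : u y ≤ u (max α (min y δ)) := by
  rcases le_total y α with hyα | hαy
  · rw [max_eq_left ((min_le_left _ _).trans hyα), hconst y ⟨hy.1, hyα⟩,
      hconst α ⟨hα, le_rfl⟩]
  rcases le_total y δ with hyδ | hδy
  · rw [min_eq_left hyδ, max_eq_right hαy]
  · rw [min_eq_right hδy, max_eq_right hαδ]
    exact hdec.antitoneOn ⟨hαδ, hδβ⟩ ⟨hαy, hy.2⟩ hδy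

theorem integral_payoff_mul_density_eq {u u' : ℝ → ℝ} {v : ℝ → ℝ → ℝ} {a b : ℝ}
    (hab : a ≤ b) (hderiv : ∀ x ∈ Icc a b, HasDerivAt u (u' x) x)
    (hcont : ContinuousOn u' (Icc a b)) (hpos : ∀ x ∈ Icc a b, 0 < u x)
    (hv : ∀ x y, v x y = if x > y then u x else u x - u y) (D y : ℝ) :
    ∫ x in a..b, v x y * (D * (-u' x) / u x ^ 2) =
      D * (Real.log (u a) - Real.log (u b)) - u y * (D / u (max a (min y b)) - D / u a) := by
  have hsub : ∀ t ∈ Icc a b, uIcc a t ⊆ Icc a b := fun t ht =>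
    uIcc_subset_Icc (left_mem_Icc.2 hab) ht
  have hclamp : max a (min y b) ∈ Icc a b := ⟨le_max_left _ _, max_le hab (min_le_right _ _)⟩
  have hb : b ∈ Icc a b := right_mem_Icc.2 hab
  have hdensity := continuousOn_neg_deriv_div_sq D (fun x hx => hderiv x (hsub b hb hx))
    (hcont.mono (hsub b hb)) (fun x hx => hpos x (hsub b hb hx))
  have hu : ContinuousOn u (uIcc a b) :=
    continuousOn_of_forall_continuousAt fun x hx => (hderiv x (hsub b hb hx)).continuousAt
  rw [integral_payoff_mul_eq hv hab hdensity.intervalIntegrable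
      (hu.mul hdensity).intervalIntegrable,
    integral_mul_neg_deriv_div_sq D (fun x hx => hderiv x (hsub b hb hx)) (hcont.mono (hsub b hb))
      (fun x hx => hpos x (hsub b hb hx)),
    integral_neg_deriv_div_sq D (fun x hx => hderiv x (hsub _ hclamp hx))
      (hcont.mono (hsub _ hclamp)) (fun x hx => hpos x (hsub _ hclamp hx))]

theorem stmt_5_general (α β δ : ℝ) (u u' : ℝ → ℝ) (v : ℝ → ℝ → ℝ)
    (hα : 0 < α)
    (hderiv : ∀ y ∈ Set.Icc α β, HasDerivAt u (u' y) y)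
    (hderivcont : ContinuousOn u' (Set.Icc α β))
    (hconst : ∀ x ∈ Set.Icc 0 α, u x = u 0)
    (hdec : StrictAntiOn u (Set.Icc α β))
    (hposu : ∀ x ∈ Set.Ico α β, 0 < u x)
    (hδ : δ ∈ Set.Ioo α β) (hδe : u δ = u 0 / Real.exp 1)
    (hv : ∀ x y, v x y = if x > y then u x else u x - u y) :
    ∀ y ∈ Set.Icc (0:ℝ) β,
      (u δ / u 0) * v 0 y + (∫ x in α..δ, v x y * (u δ * (-u' x) / (u x) ^ 2))
        ≥ u 0 / Real.exp 1 := by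
  intro y hy
  obtain ⟨hαδ, hδβ⟩ := hδ
  have hpos : ∀ x ∈ Icc α δ, 0 < u x := fun x hx => hposu x ⟨hx.1, hx.2.trans_lt hδβ⟩
  have hclamp : max α (min y δ) ∈ Icc α δ :=
    ⟨le_max_left _ _, max_le hαδ.le (min_le_right _ _)⟩
  have hu0α : u α = u 0 := hconst α ⟨hα.le, le_rfl⟩
  have hu0 : 0 < u 0 := hu0α ▸ hpos α (left_mem_Icc.2 hαδ.le)
  have hδpos : 0 < u δ := hpos δ (right_mem_Icc.2 hαδ.le)
  have hlog : Real.log (u 0) - Real.log (u δ) = 1 := by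
    rw [hδe, Real.log_div hu0.ne' (Real.exp_ne_zero 1), Real.log_exp]
    ring
  have hIcc : Icc α δ ⊆ Icc α β := Icc_subset_Icc_right hδβ.le
  rw [integral_payoff_mul_density_eq hαδ.le (fun x hx => hderiv x (hIcc hx))
      (hderivcont.mono hIcc) hpos hv, hv 0 y, if_neg (not_lt.2 hy.1), hu0α, hlog, ← hδe]
  set c := max α (min y δ)
  have hratio : u δ * (u y / u c) ≤ u δ :=
    mul_le_of_le_one_right hδpos.le ((div_le_one (hpos c hclamp)).2
      (apply_le_apply_max_min hα.le hαδ.le hδβ.le hconst hdec hy))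
  have hpayoff : u δ / u 0 * (u 0 - u y) + (u δ * 1 - u y * (u δ / u c - u δ / u 0))
      = 2 * u δ - u δ * (u y / u c) := by
    field_simp
    ring
  linarith

/-- Against the adversary's mixed strategy F (atom of mass 1/e = u(δ)/u(0) at 0
and density u(δ)·(-u'(x))/u(x)² on [α,δ]), every pure response y of the
minimizer yields expected payoff at least u(0)/e, where v(x,y) = u(x) if x > y
and u(x) - u(y) if x ≤ y. -/
theorem stmt_5 (α β δ : ℝ) (u u' : ℝ → ℝ) (v : ℝ → ℝ → ℝ)
    (hα : 0 < α) (hαβ : α < β)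
    (hderiv : ∀ y ∈ Set.Icc α β, HasDerivAt u (u' y) y)
    (hderivcont : ContinuousOn u' (Set.Icc α β))
    (hconst : ∀ x ∈ Set.Icc 0 α, u x = u 0)
    (hdec : StrictAntiOn u (Set.Icc α β))
    (hposu : ∀ x ∈ Set.Ico α β, 0 < u x)
    (hδ : δ ∈ Set.Ioo α β) (hδe : u δ = u 0 / Real.exp 1)
    (hv : ∀ x y, v x y = if x > y then u x else u x - u y) :
    ∀ y ∈ Set.Icc (0:ℝ) β,
      (u δ / u 0) * v 0 y + (∫ x in α..δ, v x y * (u δ * (-u' x) / (u x) ^ 2))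
        ≥ u 0 / Real.exp 1 :=
  stmt_5_general α β δ u u' v hα hderiv hderivcont hconst hdec hposu hδ hδe hv
end

section
/- In the binary buyer-type model with valuations b₁ < b₂, b₂ - b₁ = 1, prior probability μ ∈ (0,1) of the low type b₁, and seller valuation s ≥ 0, the optimal buyer surplus is: U*(s) = 1 - μ if s < b₂ - 1/μ; U*(s) = (b₁ - s)·μ if b₂ - 1/μ ≤ s ≤ b₁; and U*(s) = 0 if s > b₁. -/
/-!
The seller's monopoly profit is the larger of `b₁ - s` (low price, everyone buys) and
`(1 - μ)(b₂ - s)` (high price, only the high type buys), and welfare minus profit is then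
computed case by case. With `b₂ = b₁ + 1` the low price is optimal exactly when
`μ (b₂ - s) ≥ 1`, i.e. `s ≤ b₂ - 1/μ`; the buyer then keeps the high type's rent
`(1 - μ)(b₂ - b₁)`. Under the high price the seller takes the high type's whole welfare and
the buyer keeps the low type's welfare `μ (b₁ - s)`. For `s ≥ b₁` only the high type trades
and the seller extracts everything.
-/

/-- Optimal buyer surplus (total welfare minus monopoly profit, per
Bergemann–Brooks–Morris) in the binary-type model with b₂ - b₁ = 1, prior μ on
the low type b₁, and seller valuation s. -/
noncomputable def binaryUstar (b₁ b₂ μ s : ℝ) : ℝ :=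
  μ * max (b₁ - s) 0 + (1 - μ) * max (b₂ - s) 0 -
    max (max (b₁ - s) ((b₂ - s) * (1 - μ))) 0

section

variable {b₁ b₂ μ s : ℝ}

theorem binaryUstar_of_low_price_optimal (hb : b₁ ≤ b₂) (hs : s ≤ b₁)
    (hopt : (b₂ - s) * (1 - μ) ≤ b₁ - s) :
    binaryUstar b₁ b₂ μ s = (1 - μ) * (b₂ - b₁) := by
  unfold binaryUstar
  rw [max_eq_left (sub_nonneg.2 hs), max_eq_left (by linarith : 0 ≤ b₂ - s), max_eq_left hopt,
    max_eq_left (sub_nonneg.2 hs)]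
  ring

theorem binaryUstar_of_high_price_optimal (hb : b₁ ≤ b₂) (hμ : μ ≤ 1) (hs : s ≤ b₁)
    (hopt : b₁ - s ≤ (b₂ - s) * (1 - μ)) :
    binaryUstar b₁ b₂ μ s = μ * (b₁ - s) := by
  have hb₂ : 0 ≤ b₂ - s := by linarith
  unfold binaryUstar
  rw [max_eq_left (sub_nonneg.2 hs), max_eq_left hb₂, max_eq_right hopt,
    max_eq_left (mul_nonneg hb₂ (sub_nonneg.2 hμ))]
  ring

theorem binaryUstar_eq_zero_of_le (hμ : μ ≤ 1) (hs : b₁ ≤ s) : binaryUstar b₁ b₂ μ s = 0 := by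
  have hx : b₁ - s ≤ 0 := sub_nonpos.2 hs
  have hμ' : 0 ≤ 1 - μ := sub_nonneg.2 hμ
  unfold binaryUstar
  rw [max_eq_right hx]
  rcases le_total (b₂ - s) 0 with h | h
  · rw [max_eq_right h, max_eq_right (max_le hx (mul_nonpos_of_nonpos_of_nonneg h hμ'))]
    ring
  · rw [max_eq_left h, max_eq_right (hx.trans (mul_nonneg h hμ')),
      max_eq_left (mul_nonneg h hμ')]
    ring

end

theorem stmt_6_general (b₁ b₂ μ s : ℝ) (hb : b₂ = b₁ + 1)
    (hμ : μ ∈ Set.Ioo (0:ℝ) 1) :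
    (s < b₂ - 1 / μ → binaryUstar b₁ b₂ μ s = 1 - μ) ∧
    (b₂ - 1 / μ ≤ s → s ≤ b₁ → binaryUstar b₁ b₂ μ s = (b₁ - s) * μ) ∧
    (b₁ < s → binaryUstar b₁ b₂ μ s = 0) := by
  obtain ⟨hμ0, hμ1⟩ := hμ
  have hb₁₂ : b₁ ≤ b₂ := by linarith
  refine ⟨fun h => ?_, fun h hs => ?_, fun h => binaryUstar_eq_zero_of_le hμ1.le h.le⟩
  · have hopt : 1 < (b₂ - s) * μ := by
      rwa [lt_sub_comm, div_lt_iff₀ hμ0] at h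
    rw [binaryUstar_of_low_price_optimal hb₁₂ (by nlinarith) (by nlinarith), hb]
    ring
  · have hopt : (b₂ - s) * μ ≤ 1 := by
      rwa [sub_le_comm, le_div_iff₀ hμ0] at h
    rw [binaryUstar_of_high_price_optimal hb₁₂ hμ1.le hs (by nlinarith), mul_comm]

/-- Closed form of the optimal buyer surplus in the binary buyer-type model:
U*(s) = 1 - μ for s < b₂ - 1/μ; U*(s) = (b₁ - s)·μ for b₂ - 1/μ ≤ s ≤ b₁;
U*(s) = 0 for s > b₁. -/
theorem stmt_6 (b₁ b₂ μ s : ℝ) (hb : b₂ = b₁ + 1) (hb₁ : 0 < b₁)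
    (hμ : μ ∈ Set.Ioo (0:ℝ) 1) (hs : 0 ≤ s) :
    (s < b₂ - 1 / μ → binaryUstar b₁ b₂ μ s = 1 - μ) ∧
    (b₂ - 1 / μ ≤ s → s ≤ b₁ → binaryUstar b₁ b₂ μ s = (b₁ - s) * μ) ∧
    (b₁ < s → binaryUstar b₁ b₂ μ s = 0) :=
  stmt_6_general b₁ b₂ μ s hb hμ
end

section
/- Let u_β : [0,1] → ℝ be defined by u_β(p) = 0 for p < 1/b₂, u_β(p) = (b₁-β)·p for 1/b₂ ≤ p ≤ 1/(b₂-β), and u_β(p) = 1-p for p > 1/(b₂-β), where b₂ = b₁ + 1 and 0 < β < b₁. Then the concavification of u_β (the pointwise smallest concave function dominating u_β on [0,1]) is cav(u_β)(p) = (b₁-β)·p for p ≤ 1/(b₂-β) and cav(u_β)(p) = 1-p for p ≥ 1/(b₂-β). -/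
/-!
With `m = b₁ - β > 0` we have `b₂ - β = m + 1`, and the candidate is `min (m * p) (1 - p)`,
a minimum of two affine functions, hence concave; it agrees with `u_β` except on `[0, 1/b₂)`,
where `u_β = 0`. Conversely `u_β` vanishes at `0` and `1` and equals `m t = 1 - t` at the kink
`t = 1 / (m + 1)`, so any concave `g ≥ u_β` lies above the two chords through these three points,
and these chords make up the candidate.
-/

open Set

lemma convexOn_mul_add (a b : ℝ) {s : Set ℝ} (hs : Convex ℝ s) :
    ConvexOn ℝ s (fun p => a * p + b) :=
  ((LinearMap.mul ℝ ℝ a).convexOn hs).add_const b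

lemma concaveOn_mul_add (a b : ℝ) {s : Set ℝ} (hs : Convex ℝ s) :
    ConcaveOn ℝ s (fun p => a * p + b) :=
  ((LinearMap.mul ℝ ℝ a).concaveOn hs).add_const b

lemma ConvexOn.le_on_segment_of_concaveOn {E : Type*} [AddCommGroup E] [Module ℝ E]
    {s : Set E} {f g : E → ℝ} (hf : ConvexOn ℝ s f) (hg : ConcaveOn ℝ s g) {x y z : E} (hx : x ∈ s)
    (hy : y ∈ s) (hfgx : f x ≤ g x) (hfgy : f y ≤ g y) (hz : z ∈ segment ℝ x y) :
    f z ≤ g z := by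
  have := (hg.sub hf).ge_on_segment hx hy hz
  simp only [Pi.sub_apply] at this
  linarith [le_min (sub_nonneg.2 hfgx) (sub_nonneg.2 hfgy)]

lemma ite_le_one_div_eq_min {m : ℝ} (hm : 0 < m + 1) (p : ℝ) :
    (if p ≤ 1 / (m + 1) then m * p else 1 - p) = min (m * p) (1 - p) := by
  have hiff : p ≤ 1 / (m + 1) ↔ m * p ≤ 1 - p := by
    rw [le_div_iff₀ hm]
    constructor <;> intro h <;> linarith
  split_ifs with h
  · exact (min_eq_left (hiff.1 h)).symm
  · exact (min_eq_right (le_of_lt (not_le.1 (mt hiff.2 h)))).symm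

lemma concaveOn_min_mul_one_sub (m : ℝ) {s : Set ℝ} (hs : Convex ℝ s) :
    ConcaveOn ℝ s (fun p => min (m * p) (1 - p)) := by
  have := (concaveOn_mul_add m 0 hs).inf (concaveOn_mul_add (-1) 1 hs)
  refine this.congr fun p _ => ?_
  show min _ _ = min _ _
  congr 1 <;> ring

lemma one_div_add_one_mem_Icc {m : ℝ} (hm : 0 ≤ m) : 1 / (m + 1) ∈ Icc (0 : ℝ) 1 :=
  ⟨by positivity, (div_le_one (by linarith)).2 (by linarith)⟩

lemma min_mul_one_sub_le_of_concaveOn {m : ℝ} (hm : 0 ≤ m) {g : ℝ → ℝ}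
    (hg : ConcaveOn ℝ (Icc 0 1) g) (hg₀ : 0 ≤ g 0) (hg₁ : 0 ≤ g 1)
    (hgt : m * (1 / (m + 1)) ≤ g (1 / (m + 1))) {p : ℝ} (hp : p ∈ Icc (0 : ℝ) 1) :
    min (m * p) (1 - p) ≤ g p := by
  have htI := one_div_add_one_mem_Icc hm
  set t := 1 / (m + 1) with ht
  have hkink : m * t = 1 - t := by rw [ht]; field_simp; ring
  rcases le_total p t with hpt | htp
  · refine (min_le_left _ _).trans ?_
    simpa using (convexOn_mul_add m 0 (convex_Icc 0 1)).le_on_segment_of_concaveOn hg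
      (left_mem_Icc.2 zero_le_one) htI (by simpa using hg₀) (by simpa using hgt)
      (Icc_subset_segment ⟨hp.1, hpt⟩)
  · refine (min_le_right _ _).trans ?_
    simpa [sub_eq_add_neg, add_comm] using
      (convexOn_mul_add (-1) 1 (convex_Icc 0 1)).le_on_segment_of_concaveOn hg htI
      (right_mem_Icc.2 zero_le_one) (by linarith) (by simpa using hg₁)
      (Icc_subset_segment ⟨htp, hp.2⟩)

theorem stmt_9_general (b₁ b₂ β : ℝ) (u c : ℝ → ℝ) (hb : b₂ = b₁ + 1)
    (hβ : 0 < β) (hβhi : β < b₁)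
    (hu : ∀ p, u p = if p < 1 / b₂ then 0
      else if p ≤ 1 / (b₂ - β) then (b₁ - β) * p else 1 - p)
    (hc : ∀ p, c p = if p ≤ 1 / (b₂ - β) then (b₁ - β) * p else 1 - p) :
    ConcaveOn ℝ (Set.Icc 0 1) c ∧
    (∀ p ∈ Set.Icc (0:ℝ) 1, u p ≤ c p) ∧
    (∀ g : ℝ → ℝ, ConcaveOn ℝ (Set.Icc 0 1) g →
      (∀ p ∈ Set.Icc (0:ℝ) 1, u p ≤ g p) →
      ∀ p ∈ Set.Icc (0:ℝ) 1, c p ≤ g p) := by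
  set m := b₁ - β
  have hm : 0 < m := sub_pos.2 hβhi
  have hb₂β : b₂ - β = m + 1 := by rw [hb]; ring
  have hc_min : ∀ p, c p = min (m * p) (1 - p) := fun p => by
    rw [hc, hb₂β, ite_le_one_div_eq_min (by linarith)]
  have hu_c : ∀ p, u p = if p < 1 / b₂ then 0 else c p := fun p => by rw [hu, hc]
  refine ⟨(concaveOn_min_mul_one_sub m (convex_Icc 0 1)).congr fun p _ => (hc_min p).symm,
    fun p hp => ?_, fun g hg hgu p hp => ?_⟩
  · rw [hu_c]
    split_ifs
    · rw [hc_min]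
      exact le_min (mul_nonneg hm.le hp.1) (sub_nonneg.2 hp.2)
    · exact le_rfl
  · have hu₀ : u 0 = 0 := by simp [hu_c, hc_min]
    have hu₁ : u 1 = 0 := by simp [hu_c, hc_min, hm.le]
    have hut : u (1 / (m + 1)) = m * (1 / (m + 1)) := by
      have hb₂ : 1 / b₂ ≤ 1 / (m + 1) := by
        rw [← hb₂β]; exact one_div_le_one_div_of_le (by linarith) (by linarith)
      rw [hu_c, if_neg hb₂.not_gt, hc_min, min_eq_left]
      field_simp; linarith
    rw [hc_min]
    refine min_mul_one_sub_le_of_concaveOn hm.le hg ?_ ?_ ?_ hp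
    · simpa [hu₀] using hgu 0 (left_mem_Icc.2 zero_le_one)
    · simpa [hu₁] using hgu 1 (right_mem_Icc.2 zero_le_one)
    · exact hut ▸ hgu _ (one_div_add_one_mem_Icc hm.le)

/-- The concavification of the piecewise indirect utility u_β on [0,1] is the
piecewise-linear function (b₁-β)·p for p ≤ 1/(b₂-β) and 1-p beyond: it is
concave, dominates u_β, and is pointwise below every concave dominator. -/
theorem stmt_9 (b₁ b₂ β : ℝ) (u c : ℝ → ℝ) (hb : b₂ = b₁ + 1) (hb₁ : 0 < b₁)
    (hβ : 0 < β) (hβhi : β < b₁)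
    (hu : ∀ p, u p = if p < 1 / b₂ then 0
      else if p ≤ 1 / (b₂ - β) then (b₁ - β) * p else 1 - p)
    (hc : ∀ p, c p = if p ≤ 1 / (b₂ - β) then (b₁ - β) * p else 1 - p) :
    ConcaveOn ℝ (Set.Icc 0 1) c ∧
    (∀ p ∈ Set.Icc (0:ℝ) 1, u p ≤ c p) ∧
    (∀ g : ℝ → ℝ, ConcaveOn ℝ (Set.Icc 0 1) g →
      (∀ p ∈ Set.Icc (0:ℝ) 1, u p ≤ g p) →
      ∀ p ∈ Set.Icc (0:ℝ) 1, c p ≤ g p) :=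
  stmt_9_general b₁ b₂ β u c hb hβ hβhi hu hc
end

section
/- In the binary-type model with b₂ - b₁ = 1 and prior μ ≤ 1/b₂ of the low type, let F_β be the distribution on [0,β] with CDF F_β(t) = (b₁-β)/(b₁-t) for b₂ - 1/μ ≤ β < b₁. Then the expected optimal surplus satisfies E_{s∼F_β}[U*(s)] = (b₁-β)·μ·(1 + ln(b₁/(b₁-β))), where U*(s) = (b₁-s)·μ for all s in the support of F_β. -/
open Real

theorem intervalIntegral.integral_inv_const_sub {a b c : ℝ} (ha : a < c) (hb : b < c) :
    ∫ s in a..b, (c - s)⁻¹ = log ((c - a) / (c - b)) := by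
  rw [intervalIntegral.integral_comp_sub_left (fun x => x⁻¹) c,
    integral_inv_of_pos (sub_pos.2 hb) (sub_pos.2 ha)]

theorem intervalIntegral.integral_linear_mul_inv_sq {a b c : ℝ} (ha : a < c) (hb : b < c)
    (μ k : ℝ) :
    ∫ s in a..b, ((c - s) * μ) * (k / (c - s) ^ 2) = μ * k * log ((c - a) / (c - b)) := by
  have h_integrand :
      ∀ s ∈ Set.uIcc a b, ((c - s) * μ) * (k / (c - s) ^ 2) = μ * k * (c - s)⁻¹ := by
    intro s hs
    have hcs : c - s ≠ 0 := (sub_pos.2 (hs.2.trans_lt (max_lt ha hb))).ne'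
    field_simp
  rw [intervalIntegral.integral_congr h_integrand, intervalIntegral.integral_const_mul,
    intervalIntegral.integral_inv_const_sub ha hb]

/-- `E_{s∼F_β}[U*(s)]`, written as the atom `(b₁-β)/b₁` at `0` plus the density
`(b₁-β)/(b₁-s)²` on `(0,β]`. -/
theorem stmt_10_general (b₁ β μ : ℝ) (hb₁ : 0 < b₁) (hβ : 0 ≤ β)
    (hβhi : β < b₁) :
    ((b₁ - β) / b₁) * ((b₁ - 0) * μ) +
      (∫ s in (0:ℝ)..β, ((b₁ - s) * μ) * ((b₁ - β) / (b₁ - s) ^ 2)) =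
    (b₁ - β) * μ * (1 + Real.log (b₁ / (b₁ - β))) := by
  rw [intervalIntegral.integral_linear_mul_inv_sq (hβ.trans_lt hβhi) hβhi, sub_zero]
  field_simp

/-- Expected optimal surplus under the adversary distribution F_β in the case
μ ≤ 1/b₂ (where U*(s) = (b₁ - s)·μ on the support of F_β): atom of mass
(b₁-β)/b₁ at 0 plus density (b₁-β)/(b₁-t)² on (0,β]. -/
theorem stmt_10 (b₁ b₂ β μ : ℝ) (hb : b₂ = b₁ + 1) (hb₁ : 0 < b₁)
    (hμ0 : 0 < μ) (hμ : μ ≤ 1 / b₂) (hβlo : b₂ - 1 / μ ≤ β) (hβ : 0 ≤ β)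
    (hβhi : β < b₁) :
    ((b₁ - β) / b₁) * ((b₁ - 0) * μ) +
      (∫ s in (0:ℝ)..β, ((b₁ - s) * μ) * ((b₁ - β) / (b₁ - s) ^ 2)) =
    (b₁ - β) * μ * (1 + Real.log (b₁ / (b₁ - β))) :=
  stmt_10_general b₁ β μ hb₁ hβ hβhi
end

section
/- In the binary-type model with b₂ - b₁ = 1 and prior μ > 1/b₂, let F_β be as above with b₂ - 1/μ ≤ β < b₁, and U*(s) = 1-μ for s ≤ b₂ - 1/μ and (b₁-s)·μ otherwise. Then E_{s∼F_β}[U*(s)] = μ(b₁-β) + μ(b₁-β)·ln((1-μ)/(μ(b₁-β))). -/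
open Real

theorem integral_one_div_const_sub {a b c : ℝ} (ha : a < c) (hb : b < c) :
    ∫ s in a..b, 1 / (c - s) = log ((c - a) / (c - b)) := by
  rw [intervalIntegral.integral_comp_sub_left (fun x => 1 / x) c,
    integral_one_div_of_pos (by linarith) (by linarith)]

/-- On the part of the support where `U* = (c - s) μ`, the `F_β`-density `k / (c - s)²` turns the
expectation into a logarithmic integral. -/
theorem integral_const_sub_mul_mul_div_sq {a b c : ℝ} (k μ : ℝ) (ha : a < c) (hb : b < c) :
    ∫ s in a..b, ((c - s) * μ) * (k / (c - s) ^ 2) = μ * k * log ((c - a) / (c - b)) := by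
  have hintegrand : (fun s => ((c - s) * μ) * (k / (c - s) ^ 2)) =
      fun s => μ * k * (1 / (c - s)) := by
    funext s
    rcases eq_or_ne (c - s) 0 with hs | hs
    · simp [hs]
    · field_simp
  rw [hintegrand, intervalIntegral.integral_const_mul, integral_one_div_const_sub ha hb]

theorem stmt_11_general (b₁ b₂ β μ : ℝ) (hb : b₂ = b₁ + 1)
    (hβlo : b₂ - 1 / μ ≤ β) (hβhi : β < b₁) :
    (1 - μ) * ((b₁ - β) / (b₁ - (b₂ - 1 / μ))) +
      (∫ s in (b₂ - 1 / μ)..β, ((b₁ - s) * μ) * ((b₁ - β) / (b₁ - s) ^ 2)) =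
    μ * (b₁ - β) + μ * (b₁ - β) * Real.log ((1 - μ) / (μ * (b₁ - β))) := by
  have hinv : 1 < 1 / μ := by linarith
  have hμ0 : 0 < μ := one_div_pos.mp (by linarith)
  have hμ1 : μ < 1 := (one_lt_div hμ0).mp hinv
  have hgap : b₁ - (b₂ - 1 / μ) = (1 - μ) / μ := by
    rw [hb]
    field_simp
    ring
  rw [integral_const_sub_mul_mul_div_sq _ _ (by linarith) hβhi, hgap, div_div]
  have hβ : b₁ - β ≠ 0 := by linarith
  have hμ1' : 1 - μ ≠ 0 := by linarith
  field_simp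

/-- Expected optimal surplus under the adversary distribution F_β in the case
μ > 1/b₂: U*(s) = 1-μ on [0, b₂ - 1/μ] (total F_β-mass F_β(b₂ - 1/μ)) and
U*(s) = (b₁-s)·μ above, with density (b₁-β)/(b₁-t)². -/
theorem stmt_11 (b₁ b₂ β μ : ℝ) (hb : b₂ = b₁ + 1) (hb₁ : 0 < b₁)
    (hμ : 1 / b₂ < μ) (hμ1 : μ < 1) (hβlo : b₂ - 1 / μ ≤ β) (hβhi : β < b₁) :
    (1 - μ) * ((b₁ - β) / (b₁ - (b₂ - 1 / μ))) +
      (∫ s in (b₂ - 1 / μ)..β, ((b₁ - s) * μ) * ((b₁ - β) / (b₁ - s) ^ 2)) =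
    μ * (b₁ - β) + μ * (b₁ - β) * Real.log ((1 - μ) / (μ * (b₁ - β))) :=
  stmt_11_general b₁ b₂ β μ hb hβlo hβhi
end

section
/- In the binary-type model with b₂ - b₁ = 1 and prior μ of the low type, the regret of the adversary's strategy F_β (defined as E_{s∼F_β}[U*(s)] - cav(u_β)(μ)) equals μ(b₁-β)·ln(b₁/(b₁-β)) when μ ≤ 1/b₂, and μ(b₁-β)·ln((1-μ)/(μ(b₁-β))) when μ > 1/b₂. Maximizing over β ∈ [b₂ - 1/μ, b₁): the optimal β* is b₁(1 - 1/e) in the first case and b₁ - (1-μ)/(e·μ) in the second, and the resulting regret is b₁μ/e in the first case and (1-μ)/e in the second; in both cases this equals U*(0)/e. -/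
/-- Regret of the adversary strategy F_β: expected optimal surplus
E_{s∼F_β}[U*(s)] minus the designer's best reply cav(u_β)(μ) = (b₁-β)·μ. -/
noncomputable def FbetaRegret (b₁ b₂ μ β : ℝ) : ℝ :=
  (if μ ≤ 1 / b₂ then
      ((b₁ - β) / b₁) * (b₁ * μ) +
        ∫ s in (0:ℝ)..β, ((b₁ - s) * μ) * ((b₁ - β) / (b₁ - s) ^ 2)
    else
      (1 - μ) * ((b₁ - β) / (b₁ - (b₂ - 1 / μ))) +
        ∫ s in (b₂ - 1 / μ)..β, ((b₁ - s) * μ) * ((b₁ - β) / (b₁ - s) ^ 2))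
  - (b₁ - β) * μ

/-! On the support of `F_β` the atom at its lower end exactly cancels the designer's payoff
`(b₁ - β) μ`, so the regret is the integral of `U*(s) dF_β(s) = μ (b₁ - β) / (b₁ - s) ds`, namely
`μ x log (c / x)` with `x = b₁ - β` and `c = b₁ - a`, `a` the lower end of the support. Since
`log y ≤ y - 1`, `x log (c / x) ≤ c / e` with equality at `x = c / e`, and `μ c = U*(0)`. -/

open Real Set

theorem integral_inv_sub {a β b : ℝ} (haβ : a ≤ β) (hβb : β < b) :
    ∫ s in a..β, (b - s)⁻¹ = log ((b - a) / (b - β)) := by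
  rw [intervalIntegral.integral_comp_sub_left (fun s => s⁻¹) b,
    integral_inv_of_pos (by linarith) (by linarith)]

theorem integral_FbetaDensity {a β b : ℝ} (μ : ℝ) (haβ : a ≤ β) (hβb : β < b) :
    ∫ s in a..β, ((b - s) * μ) * ((b - β) / (b - s) ^ 2) =
      μ * (b - β) * log ((b - a) / (b - β)) := by
  have hcongr : EqOn (fun s => ((b - s) * μ) * ((b - β) / (b - s) ^ 2))
      (fun s => μ * (b - β) * (b - s)⁻¹) (uIcc a β) := by
    intro s hs
    have : b - s ≠ 0 := by
      rw [uIcc_of_le haβ] at hs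
      linarith [hs.2]
    field_simp
  rw [intervalIntegral.integral_congr hcongr, intervalIntegral.integral_const_mul,
    integral_inv_sub haβ hβb]

theorem FbetaRegret_of_le {b₁ b₂ μ : ℝ} (β : ℝ) (hb₁ : b₁ ≠ 0) (h : μ ≤ 1 / b₂) :
    FbetaRegret b₁ b₂ μ β = ∫ s in (0:ℝ)..β, ((b₁ - s) * μ) * ((b₁ - β) / (b₁ - s) ^ 2) := by
  rw [FbetaRegret, if_pos h]
  field_simp
  ring

theorem sub_sub_one_div_eq {b₁ b₂ μ : ℝ} (hb : b₂ = b₁ + 1) (hμ : μ ≠ 0) :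
    b₁ - (b₂ - 1 / μ) = (1 - μ) / μ := by
  rw [hb]
  field_simp
  ring

theorem FbetaRegret_of_lt {b₁ b₂ μ : ℝ} (β : ℝ) (hb : b₂ = b₁ + 1) (hμ0 : 0 < μ)
    (hμ1 : μ < 1) (h : 1 / b₂ < μ) :
    FbetaRegret b₁ b₂ μ β =
      ∫ s in (b₂ - 1 / μ)..β, ((b₁ - s) * μ) * ((b₁ - β) / (b₁ - s) ^ 2) := by
  have : 1 - μ ≠ 0 := by linarith
  rw [FbetaRegret, if_neg h.not_ge, sub_sub_one_div_eq hb hμ0.ne']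
  field_simp
  ring

theorem binaryUstar_zero_of_le {b₁ b₂ μ : ℝ} (hb : b₂ = b₁ + 1) (hb₁ : 0 < b₁)
    (h : μ ≤ 1 / b₂) :
    binaryUstar b₁ b₂ μ 0 = b₁ * μ := by
  have hb₂ : 0 < b₂ := by linarith
  have hμb₂ : μ * b₂ ≤ 1 := (le_div_iff₀ hb₂).mp h
  have hlow : b₁ ≤ b₂ * (1 - μ) := by nlinarith
  rw [binaryUstar, sub_zero, sub_zero, max_eq_left hb₁.le, max_eq_left hb₂.le,
    max_eq_right hlow, max_eq_left (by linarith)]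
  ring

theorem binaryUstar_zero_of_lt {b₁ b₂ μ : ℝ} (hb : b₂ = b₁ + 1) (hb₁ : 0 < b₁)
    (h : 1 / b₂ < μ) :
    binaryUstar b₁ b₂ μ 0 = 1 - μ := by
  have hb₂ : 0 < b₂ := by linarith
  have hμb₂ : 1 < μ * b₂ := (div_lt_iff₀ hb₂).mp h
  have hhigh : b₂ * (1 - μ) ≤ b₁ := by nlinarith
  rw [binaryUstar, sub_zero, sub_zero, max_eq_left hb₁.le, max_eq_left hb₂.le,
    max_eq_left hhigh, max_eq_left hb₁.le, hb]
  ring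

theorem mul_log_div_le {x c : ℝ} (hx : 0 < x) (hc : 0 < c) :
    x * log (c / x) ≤ c / exp 1 := by
  have hy : 0 < c / (exp 1 * x) := by positivity
  have hlog : log (c / x) = log (c / (exp 1 * x)) + 1 := by
    rw [log_div hc.ne' hx.ne', log_div hc.ne' (by positivity),
      log_mul (exp_pos 1).ne' hx.ne', log_exp]
    ring
  calc x * log (c / x) ≤ x * (c / (exp 1 * x)) := by
        rw [hlog]
        nlinarith [log_le_sub_one_of_pos hy]
    _ = c / exp 1 := by field_simp

theorem div_exp_mul_log_div_div_exp {c : ℝ} (hc : 0 < c) :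
    c / exp 1 * log (c / (c / exp 1)) = c / exp 1 := by
  rw [div_div_cancel₀ hc.ne', log_exp, mul_one]

theorem isMaxOn_mul_log_div {R : ℝ → ℝ} {a b μ c : ℝ}
    (hR : ∀ β, a ≤ β → β < b → R β = μ * (b - β) * log (c / (b - β)))
    (hμ : 0 ≤ μ) (hc : 0 < c) (hac : b - a = c) :
    b - c / exp 1 ∈ Ico a b ∧
      (∀ β, a ≤ β → β < b → R β ≤ R (b - c / exp 1)) ∧
      R (b - c / exp 1) = μ * c / exp 1 := by
  have hce : c / exp 1 ≤ c := div_le_self hc.le (one_le_exp zero_le_one)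
  have hmem : b - c / exp 1 ∈ Ico a b := ⟨by linarith, by simp only [sub_lt_self_iff]; positivity⟩
  have hval : R (b - c / exp 1) = μ * c / exp 1 := by
    rw [hR _ hmem.1 hmem.2, sub_sub_cancel, mul_assoc, div_exp_mul_log_div_div_exp hc,
      mul_div_assoc]
  refine ⟨hmem, fun β haβ hβb => ?_, hval⟩
  rw [hval, hR β haβ hβb, mul_assoc, mul_div_assoc]
  exact mul_le_mul_of_nonneg_left (mul_log_div_le (by linarith) hc) hμ

/-- Closed form of the regret of F_β, the optimal choice β*, and the resulting
maximal regret U*(0)/e. -/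
theorem stmt_12 (b₁ b₂ μ : ℝ) (hb : b₂ = b₁ + 1) (hb₁ : 0 < b₁)
    (hμ : μ ∈ Set.Ioo (0:ℝ) 1) :
    (∀ β, max (b₂ - 1 / μ) 0 ≤ β → β < b₁ →
      FbetaRegret b₁ b₂ μ β =
        if μ ≤ 1 / b₂ then μ * (b₁ - β) * Real.log (b₁ / (b₁ - β))
        else μ * (b₁ - β) * Real.log ((1 - μ) / (μ * (b₁ - β)))) ∧
    (let βstar := if μ ≤ 1 / b₂ then b₁ * (1 - 1 / Real.exp 1)
        else b₁ - (1 - μ) / (Real.exp 1 * μ);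
      βstar ∈ Set.Ico (max (b₂ - 1 / μ) 0) b₁ ∧
      (∀ β, max (b₂ - 1 / μ) 0 ≤ β → β < b₁ →
        FbetaRegret b₁ b₂ μ β ≤ FbetaRegret b₁ b₂ μ βstar) ∧
      FbetaRegret b₁ b₂ μ βstar =
        (if μ ≤ 1 / b₂ then b₁ * μ / Real.exp 1 else (1 - μ) / Real.exp 1) ∧
      FbetaRegret b₁ b₂ μ βstar = binaryUstar b₁ b₂ μ 0 / Real.exp 1) := by
  obtain ⟨hμ0, hμ1⟩ := hμ
  have hb₂ : 0 < b₂ := by linarith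
  by_cases h : μ ≤ 1 / b₂
  · have ha : max (b₂ - 1 / μ) 0 = 0 :=
      max_eq_right (sub_nonpos.mpr ((le_one_div hμ0 hb₂).mp h))
    have hR : ∀ β, 0 ≤ β → β < b₁ →
        FbetaRegret b₁ b₂ μ β = μ * (b₁ - β) * log (b₁ / (b₁ - β)) := fun β h0 hβ => by
      rw [FbetaRegret_of_le β hb₁.ne' h, integral_FbetaDensity μ h0 hβ, sub_zero]
    obtain ⟨hmem, hle, hval⟩ := isMaxOn_mul_log_div hR hμ0.le hb₁ (sub_zero b₁)
    simp only [if_pos h, ha, binaryUstar_zero_of_le hb hb₁ h,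
      show b₁ * (1 - 1 / exp 1) = b₁ - b₁ / exp 1 by ring]
    exact ⟨hR, hmem, hle, by rw [hval]; ring, by rw [hval]; ring⟩
  · rw [not_le] at h
    have hgap := sub_sub_one_div_eq hb hμ0.ne'
    have ha : max (b₂ - 1 / μ) 0 = b₂ - 1 / μ :=
      max_eq_left (sub_nonneg.mpr ((one_div_le hμ0 hb₂).mpr h.le))
    have hR : ∀ β, b₂ - 1 / μ ≤ β → β < b₁ →
        FbetaRegret b₁ b₂ μ β = μ * (b₁ - β) * log ((1 - μ) / μ / (b₁ - β)) :=
      fun β h0 hβ => by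
        rw [FbetaRegret_of_lt β hb hμ0 hμ1 h, integral_FbetaDensity μ h0 hβ, hgap]
    obtain ⟨hmem, hle, hval⟩ :=
      isMaxOn_mul_log_div hR hμ0.le (div_pos (by linarith) hμ0) hgap
    simp only [if_neg h.not_ge, ha, binaryUstar_zero_of_lt hb hb₁ h,
      show (1 - μ) / (exp 1 * μ) = (1 - μ) / μ / exp 1 by ring]
    refine ⟨fun β h0 hβ => by rw [hR β h0 hβ, div_div], hmem, hle, ?_, ?_⟩ <;>
      · rw [hval]
        field_simp
end

section
/- Let b₁ < b₂ < ... < bₙ be positive reals, p ∈ Δ({b₁,...,bₙ}) a probability vector, and s_D ≥ 0. Suppose p is an equal-revenue segment with respect to s_D: for all i, j, (bᵢ - s_D)·Σ_{k≥i} pₖ = (bⱼ - s_D)·Σ_{k≥j} pₖ. Then for any seller valuation s: if s > s_D, the price bⱼ with j the maximal index in the support of p strictly dominates every price bᵢ with i < j in the support, i.e., (bᵢ - s)·Σ_{k≥i} pₖ < (bⱼ - s)·Σ_{k≥j} pₖ; and if s < s_D, the minimal supported price strictly dominates every higher supported price. -/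
/-!
Moving the seller's valuation from `s_D` to `s` changes the revenue of price `bᵢ` by
`(s_D - s) · Fᵢ`. The tail mass `Fᵢ` strictly decreases from one supported index to any
later one, so revenues that are equal at `s_D` become strictly ordered at `s`, in the
direction given by the sign of `s - s_D`.
-/

open Finset

theorem sum_Ici_lt_sum_Ici_of_lt {ι : Type*} [Preorder ι] [LocallyFiniteOrderTop ι]
    {p : ι → ℝ} (hp : ∀ k, 0 ≤ p k) {i j : ι} (hij : i < j) (hpi : p i ≠ 0) :
    ∑ k ∈ Ici j, p k < ∑ k ∈ Ici i, p k :=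
  sum_lt_sum_of_subset (Ici_subset_Ici.mpr hij.le) (mem_Ici.mpr le_rfl)
    (fun h => hij.not_ge (mem_Ici.mp h)) ((hp i).lt_of_ne' hpi) (fun k _ _ => hp k)

theorem sub_mul_sub_sub_eq_of_sub_mul_eq {R : Type*} [CommRing R] {x y d d' F G : R}
    (h : (x - d) * F = (y - d) * G) :
    (x - d') * F - (y - d') * G = (d - d') * (F - G) := by
  linear_combination h

open Finset in
theorem stmt_14_general (n : ℕ) (b p : Fin n → ℝ) (sD s : ℝ)
    (hpnn : ∀ i, 0 ≤ p i)
    (heq : ∀ i j : Fin n,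
      (b i - sD) * ∑ k ∈ Finset.Ici i, p k = (b j - sD) * ∑ k ∈ Finset.Ici j, p k) :
    (sD < s → ∀ j : Fin n, p j ≠ 0 → (∀ k, p k ≠ 0 → k ≤ j) →
      ∀ i : Fin n, p i ≠ 0 → i < j →
        (b i - s) * ∑ k ∈ Finset.Ici i, p k < (b j - s) * ∑ k ∈ Finset.Ici j, p k) ∧
    (s < sD → ∀ j : Fin n, p j ≠ 0 → (∀ k, p k ≠ 0 → j ≤ k) →
      ∀ i : Fin n, p i ≠ 0 → j < i →
        (b i - s) * ∑ k ∈ Finset.Ici i, p k < (b j - s) * ∑ k ∈ Finset.Ici j, p k) := by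
  constructor
  · intro hs j _ _ i hpi hij
    have hshift := sub_mul_sub_sub_eq_of_sub_mul_eq (d' := s) (heq i j)
    have hdemand := sum_Ici_lt_sum_Ici_of_lt hpnn hij hpi
    exact sub_neg.mp (hshift ▸ mul_neg_of_neg_of_pos (sub_neg.mpr hs) (sub_pos.mpr hdemand))
  · intro hs j hpj _ i _ hji
    have hshift := sub_mul_sub_sub_eq_of_sub_mul_eq (d' := s) (heq i j)
    have hdemand := sum_Ici_lt_sum_Ici_of_lt hpnn hji hpj
    exact sub_neg.mp (hshift ▸ mul_neg_of_pos_of_neg (sub_pos.mpr hs) (sub_neg.mpr hdemand))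

open Finset in
/-- In an equal-revenue segment with respect to s_D, if s > s_D the maximal
supported price strictly dominates every lower supported price, and if s < s_D
the minimal supported price strictly dominates every higher supported price. -/
theorem stmt_14 (n : ℕ) (b p : Fin n → ℝ) (sD s : ℝ)
    (hbpos : ∀ i, 0 < b i) (hbmono : StrictMono b)
    (hpnn : ∀ i, 0 ≤ p i) (hpsum : ∑ i, p i = 1) (hsD : 0 ≤ sD)
    (heq : ∀ i j : Fin n,
      (b i - sD) * ∑ k ∈ Finset.Ici i, p k = (b j - sD) * ∑ k ∈ Finset.Ici j, p k) :
    (sD < s → ∀ j : Fin n, p j ≠ 0 → (∀ k, p k ≠ 0 → k ≤ j) →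
      ∀ i : Fin n, p i ≠ 0 → i < j →
        (b i - s) * ∑ k ∈ Finset.Ici i, p k < (b j - s) * ∑ k ∈ Finset.Ici j, p k) ∧
    (s < sD → ∀ j : Fin n, p j ≠ 0 → (∀ k, p k ≠ 0 → j ≤ k) →
      ∀ i : Fin n, p i ≠ 0 → j < i →
        (b i - s) * ∑ k ∈ Finset.Ici i, p k < (b j - s) * ∑ k ∈ Finset.Ici j, p k) :=
  stmt_14_general n b p sD s hpnn heq
end

section
/- Generalized-regret zero-sum game: let 0 < α < β, u : [0,β] → ℝ≥0 continuously differentiable, constant on [0,α], strictly decreasing and positive on [α,β), and λ ∈ (0,1). Let δ_λ ∈ (α,β) satisfy u(δ_λ) = u(0)·e^{-(1-λ)/λ} (assume such δ_λ exists). Define g_λ(y) = -(λ/(1-λ))·u'(y)/u(y) on [α,δ_λ], zero elsewhere. Then g_λ is a probability density, and for the payoff v_λ(x,y) = λu(x) for x > y, λu(x) - (1-λ)u(y) for x ≤ y, every x ∈ [0,β] satisfies ∫ v_λ(x,y)·g_λ(y) dy ≤ λ·u(0)·e^{-(1-λ)/λ}. -/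
/-!
On `[α, δ]` the density is `g = -(λ/(1-λ)) (log u)'`, so its mass is
`(λ/(1-λ)) log (u α / u δ) = 1`, and `u g = -(λ/(1-λ)) u'`. Writing
`v x y = λ u x - (1-λ) 𝟙[x ≤ y] u y`, the expected payoff of `x` is
`λ u x - (1-λ) ∫_{[max α x, δ]} u g = λ u x - λ (u (max α x) - u δ)`.
Since `u` is constant on `[0, α]`, this is exactly `λ u δ` for `x ≤ δ`, while for `x > δ` it is
`λ u x ≤ λ u δ`.
-/

open MeasureTheory Set Real

theorem intervalIntegral_eq_setIntegral_Icc_of_eq_zero_outside {f : ℝ → ℝ} {a b c d : ℝ}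
    (hca : c < a) (hab : a ≤ b) (hbd : b ≤ d) (hf : ∀ y ∉ Icc a b, f y = 0) :
    ∫ y in c..d, f y = ∫ y in Icc a b, f y := by
  have hind : (Icc a b).indicator f = f :=
    indicator_eq_self.2 fun y hy => not_not.1 fun h => hy (hf y h)
  calc ∫ y in c..d, f y = ∫ y in Ioc c d, (Icc a b).indicator f y := by
        rw [intervalIntegral.integral_of_le (hca.le.trans (hab.trans hbd)), hind]
    _ = ∫ y in Icc a b, f y := by
        rw [setIntegral_indicator measurableSet_Icc,
          inter_eq_right.2 ((Icc_subset_Ioc_iff hab).2 ⟨hca, hbd⟩)]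

theorem HasDerivAt.nonpos_of_antitoneOn_Icc {f : ℝ → ℝ} {f' a b x : ℝ}
    (hd : HasDerivAt f f' x) (hf : AntitoneOn f (Icc a b)) (hx : x ∈ Ico a b) : f' ≤ 0 := by
  refine hd.hasDerivWithinAt.nonpos_of_antitoneOn ?_ hf
  have hsub : Ioo x b ⊆ Icc a b \ {x} :=
    fun y hy => ⟨⟨hx.1.trans hy.1.le, hy.2.le⟩, hy.1.ne'⟩
  have : (nhdsWithin x (Ioo x b)).NeBot := by
    rw [nhdsWithin_Ioo_eq_nhdsGT hx.2]; infer_instance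
  exact accPt_principal_iff_nhdsWithin.2 (this.mono (nhdsWithin_mono x hsub))

section FTC

variable {f f' : ℝ → ℝ} {a b : ℝ}

theorem integral_Icc_eq_sub_of_hasDerivAt (hab : a ≤ b)
    (hderiv : ∀ x ∈ Icc a b, HasDerivAt f (f' x) x) (hcont : ContinuousOn f' (Icc a b)) :
    ∫ x in Icc a b, f' x = f b - f a := by
  rw [integral_Icc_eq_integral_Ioc, ← intervalIntegral.integral_of_le hab,
    intervalIntegral.integral_eq_sub_of_hasDerivAt (by rwa [uIcc_of_le hab])
      (hcont.intervalIntegrable_of_Icc hab)]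

theorem integral_Icc_div_eq_log_sub (hab : a ≤ b)
    (hderiv : ∀ x ∈ Icc a b, HasDerivAt f (f' x) x) (hcont : ContinuousOn f' (Icc a b))
    (hpos : ∀ x ∈ Icc a b, 0 < f x) :
    ∫ x in Icc a b, f' x / f x = log (f b) - log (f a) :=
  integral_Icc_eq_sub_of_hasDerivAt hab (fun x hx => (hderiv x hx).log (hpos x hx).ne')
    (hcont.div (HasDerivAt.continuousOn hderiv) fun x hx => (hpos x hx).ne')

end FTC

section Density

variable {lam α β δ : ℝ} {u u' g : ℝ → ℝ}

theorem density_nonneg (hlam : lam ∈ Ioo 0 1) (hδβ : δ < β)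
    (hderiv : ∀ y ∈ Icc α δ, HasDerivAt u (u' y) y) (hdec : StrictAntiOn u (Icc α β))
    (hpos : ∀ y ∈ Icc α δ, 0 < u y)
    (hg : ∀ y, g y = if y ∈ Icc α δ then -(lam / (1 - lam)) * (u' y / u y) else 0) (y : ℝ) :
    0 ≤ g y := by
  rw [hg]
  split_ifs with hy
  · have hu' : u' y ≤ 0 :=
      (hderiv y hy).nonpos_of_antitoneOn_Icc hdec.antitoneOn ⟨hy.1, hy.2.trans_lt hδβ⟩
    have hc : 0 < lam / (1 - lam) := div_pos hlam.1 (sub_pos.2 hlam.2)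
    have := div_nonpos_of_nonpos_of_nonneg hu' (hpos y hy).le
    nlinarith
  · exact le_rfl

theorem continuousOn_density (hderiv : ∀ y ∈ Icc α δ, HasDerivAt u (u' y) y)
    (hcont : ContinuousOn u' (Icc α δ)) (hpos : ∀ y ∈ Icc α δ, 0 < u y)
    (hg : ∀ y ∈ Icc α δ, g y = -(lam / (1 - lam)) * (u' y / u y)) :
    ContinuousOn g (Icc α δ) :=
  (continuousOn_const.mul (hcont.div (HasDerivAt.continuousOn hderiv)
    fun y hy => (hpos y hy).ne')).congr hg

theorem setIntegral_density_eq_one (hlam : lam ∈ Ioo 0 1) (hαδ : α ≤ δ)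
    (hderiv : ∀ y ∈ Icc α δ, HasDerivAt u (u' y) y) (hcont : ContinuousOn u' (Icc α δ))
    (hpos : ∀ y ∈ Icc α δ, 0 < u y) (hδ : u δ = u α * exp (-(1 - lam) / lam))
    (hg : ∀ y ∈ Icc α δ, g y = -(lam / (1 - lam)) * (u' y / u y)) :
    ∫ y in Icc α δ, g y = 1 := by
  have hα : u α ≠ 0 := (hpos α ⟨le_rfl, hαδ⟩).ne'
  have h0 : lam ≠ 0 := hlam.1.ne'
  have h1 : 1 - lam ≠ 0 := (sub_pos.2 hlam.2).ne'
  rw [setIntegral_congr_fun measurableSet_Icc hg, integral_const_mul,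
    integral_Icc_div_eq_log_sub hαδ hderiv hcont hpos, hδ, log_mul hα (exp_pos _).ne', log_exp]
  field_simp
  ring

theorem setIntegral_mul_density {a : ℝ} (hαa : α ≤ a) (haδ : a ≤ δ)
    (hderiv : ∀ y ∈ Icc α δ, HasDerivAt u (u' y) y) (hcont : ContinuousOn u' (Icc α δ))
    (hpos : ∀ y ∈ Icc α δ, 0 < u y)
    (hg : ∀ y ∈ Icc α δ, g y = -(lam / (1 - lam)) * (u' y / u y)) :
    ∫ y in Icc a δ, u y * g y = lam / (1 - lam) * (u a - u δ) := by
  have hsub : Icc a δ ⊆ Icc α δ := Icc_subset_Icc_left hαa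
  have heq : EqOn (fun y => u y * g y) (fun y => -(lam / (1 - lam)) * u' y) (Icc a δ) := by
    intro y hy
    have := (hpos y (hsub hy)).ne'
    simp only [hg y (hsub hy)]
    field_simp
  rw [setIntegral_congr_fun measurableSet_Icc heq, integral_const_mul,
    integral_Icc_eq_sub_of_hasDerivAt haδ (fun y hy => hderiv y (hsub hy)) (hcont.mono hsub)]
  ring

theorem payoff_sub_setIntegral_mul_density_le {x : ℝ} (hlam : lam ∈ Ioo 0 1) (hαδ : α ≤ δ)
    (hδβ : δ < β) (hx : x ∈ Icc 0 β) (hconst : ∀ y ∈ Icc 0 α, u y = u α)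
    (hderiv : ∀ y ∈ Icc α δ, HasDerivAt u (u' y) y) (hcont : ContinuousOn u' (Icc α δ))
    (hdec : StrictAntiOn u (Icc α β)) (hpos : ∀ y ∈ Icc α δ, 0 < u y)
    (hg : ∀ y ∈ Icc α δ, g y = -(lam / (1 - lam)) * (u' y / u y)) :
    lam * u x - (1 - lam) * ∫ y in Icc (α ⊔ x) δ, u y * g y ≤ lam * u δ := by
  rcases le_or_gt x δ with hxδ | hxδ
  · have hux : u (α ⊔ x) = u x := by
      rcases le_total α x with h | h
      · rw [sup_eq_right.2 h]
      · rw [sup_eq_left.2 h, hconst x ⟨hx.1, h⟩]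
    rw [setIntegral_mul_density le_sup_left (sup_le hαδ hxδ) hderiv hcont hpos hg, hux]
    refine le_of_eq ?_
    field_simp [(sub_pos.2 hlam.2).ne']
    ring
  · rw [Icc_eq_empty_of_lt (lt_sup_of_lt_right hxδ), setIntegral_empty]
    have := hdec ⟨hαδ, hδβ.le⟩ ⟨hαδ.trans hxδ.le, hx.2⟩ hxδ
    nlinarith [hlam.1]

end Density

theorem setIntegral_Icc_payoff_mul {lam a b x : ℝ} {u g : ℝ → ℝ} {v : ℝ → ℝ → ℝ}
    (hv : ∀ x y, v x y = if x > y then lam * u x else lam * u x - (1 - lam) * u y)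
    (hg : IntegrableOn g (Icc a b)) (hug : IntegrableOn (fun y => u y * g y) (Icc a b)) :
    ∫ y in Icc a b, v x y * g y =
      lam * u x * (∫ y in Icc a b, g y) - (1 - lam) * ∫ y in Icc (a ⊔ x) b, u y * g y := by
  have hsplit : ∀ y, v x y * g y =
      lam * u x * g y - (1 - lam) * (Ici x).indicator (fun y => u y * g y) y := by
    intro y
    by_cases hxy : x ≤ y
    · simp only [hv, indicator_of_mem (mem_Ici.2 hxy), if_neg (not_lt.2 hxy)]; ring
    · simp only [hv, indicator_of_notMem (mt mem_Ici.1 hxy), if_pos (not_le.1 hxy)]; ring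
  simp_rw [hsplit]
  rw [integral_sub (hg.const_mul _) ((hug.indicator measurableSet_Ici).const_mul _),
    integral_const_mul, integral_const_mul, setIntegral_indicator measurableSet_Ici]
  have hinter : Icc a b ∩ Ici x = Icc (a ⊔ x) b := by
    ext y
    simp only [mem_inter_iff, mem_Icc, mem_Ici, sup_le_iff]
    tauto
  rw [hinter]

theorem stmt_16_general (α β δ lam : ℝ) (u u' g : ℝ → ℝ) (v : ℝ → ℝ → ℝ)
    (hα : 0 < α) (hlam : lam ∈ Set.Ioo (0:ℝ) 1)
    (hderiv : ∀ y ∈ Set.Icc α β, HasDerivAt u (u' y) y)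
    (hderivcont : ContinuousOn u' (Set.Icc α β))
    (hconst : ∀ x ∈ Set.Icc 0 α, u x = u 0)
    (hdec : StrictAntiOn u (Set.Icc α β))
    (hposu : ∀ x ∈ Set.Ico α β, 0 < u x)
    (hδ : δ ∈ Set.Ioo α β) (hδe : u δ = u 0 * Real.exp (-(1 - lam) / lam))
    (hg : ∀ y, g y = if y ∈ Set.Icc α δ then -(lam / (1 - lam)) * (u' y / u y) else 0)
    (hv : ∀ x y, v x y = if x > y then lam * u x else lam * u x - (1 - lam) * u y) :
    ((∀ y, 0 ≤ g y) ∧ ∫ y in (0:ℝ)..β, g y = 1) ∧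
    (∀ x ∈ Set.Icc (0:ℝ) β,
      (∫ y in (0:ℝ)..β, v x y * g y) ≤ lam * u 0 * Real.exp (-(1 - lam) / lam)) := by
  obtain ⟨hαδ, hδβ⟩ := hδ
  have hsub : Icc α δ ⊆ Icc α β := Icc_subset_Icc_right hδβ.le
  have hderiv' : ∀ y ∈ Icc α δ, HasDerivAt u (u' y) y := fun y hy => hderiv y (hsub hy)
  have hcont' : ContinuousOn u' (Icc α δ) := hderivcont.mono hsub
  have hpos : ∀ y ∈ Icc α δ, 0 < u y := fun y hy => hposu y ⟨hy.1, hy.2.trans_lt hδβ⟩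
  have hgIcc : ∀ y ∈ Icc α δ, g y = -(lam / (1 - lam)) * (u' y / u y) :=
    fun y hy => by rw [hg, if_pos hy]
  have hg0 : ∀ y ∉ Icc α δ, g y = 0 := fun y hy => by rw [hg, if_neg hy]
  have huα : u α = u 0 := hconst α ⟨hα.le, le_rfl⟩
  have hmass := setIntegral_density_eq_one hlam hαδ.le hderiv' hcont' hpos (huα ▸ hδe) hgIcc
  have hgc := continuousOn_density hderiv' hcont' hpos hgIcc
  have hugc : ContinuousOn (fun y => u y * g y) (Icc α δ) :=
    (HasDerivAt.continuousOn hderiv').mul hgc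
  refine ⟨⟨density_nonneg hlam hδβ hderiv' hdec hpos hg, ?_⟩, fun x hx => ?_⟩
  · rw [intervalIntegral_eq_setIntegral_Icc_of_eq_zero_outside hα hαδ.le hδβ.le hg0, hmass]
  rw [intervalIntegral_eq_setIntegral_Icc_of_eq_zero_outside hα hαδ.le hδβ.le
      fun y hy => by rw [hg0 y hy, mul_zero],
    setIntegral_Icc_payoff_mul hv hgc.integrableOn_Icc hugc.integrableOn_Icc, hmass,
    mul_one, mul_assoc lam (u 0), ← hδe]
  exact payoff_sub_setIntegral_mul_density_le hlam hαδ.le hδβ hx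
    (fun y hy => (hconst y hy).trans huα.symm) hderiv' hcont' hdec hpos hgIcc

/-- Generalized-regret zero-sum game: the density
g_λ(y) = -(λ/(1-λ))·u'(y)/u(y) on [α,δ_λ] is a probability density, and against
it every action x yields expected payoff at most λ·u(0)·e^{-(1-λ)/λ}, where
v_λ(x,y) = λu(x) for x > y and λu(x) - (1-λ)u(y) for x ≤ y. -/
theorem stmt_16 (α β δ lam : ℝ) (u u' g : ℝ → ℝ) (v : ℝ → ℝ → ℝ)
    (hα : 0 < α) (hαβ : α < β) (hlam : lam ∈ Set.Ioo (0:ℝ) 1)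
    (hderiv : ∀ y ∈ Set.Icc α β, HasDerivAt u (u' y) y)
    (hderivcont : ContinuousOn u' (Set.Icc α β))
    (hconst : ∀ x ∈ Set.Icc 0 α, u x = u 0)
    (hdec : StrictAntiOn u (Set.Icc α β))
    (hposu : ∀ x ∈ Set.Ico α β, 0 < u x)
    (hδ : δ ∈ Set.Ioo α β) (hδe : u δ = u 0 * Real.exp (-(1 - lam) / lam))
    (hg : ∀ y, g y = if y ∈ Set.Icc α δ then -(lam / (1 - lam)) * (u' y / u y) else 0)
    (hv : ∀ x y, v x y = if x > y then lam * u x else lam * u x - (1 - lam) * u y) :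
    ((∀ y, 0 ≤ g y) ∧ ∫ y in (0:ℝ)..β, g y = 1) ∧
    (∀ x ∈ Set.Icc (0:ℝ) β,
      (∫ y in (0:ℝ)..β, v x y * g y) ≤ lam * u 0 * Real.exp (-(1 - lam) / lam)) :=
  stmt_16_general α β δ lam u u' g v hα hlam hderiv hderivcont hconst hdec hposu hδ hδe hg hv
end
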